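/- Let m>0 and let p₁,p₂,q : [0,∞)→ℝ be integrable. Let λ ∈ ℂ∖[−m,m] with Im λ ≥ 0, and define χⁿ(x,λ) by the recursion χ⁰(λ)=(k₀(λ),1)ᵀ, χ^{n+1}(x,λ)=∫_x^∞ G(x,t,λ)·(iσ₂)·V(t)·χⁿ(t,λ) dt. Then for every n ≥ 1 and every x ≥ 0, |χⁿ(x,λ)| ≤ (K₂(λ)/n!)·( K₁(λ)·∫_x^∞ (|p₁(t)|+|p₂(t)|+2|q(t)|) dt )ⁿ; consequently the series χ(x,λ)=Σ_{n≥0}χⁿ(x,λ) converges absolutely and |χ(x,λ)| ≤ K₂(λ)·exp( K₁(λ)·∫_x^∞ (|p₁(t)|+|p₂(t)|+2|q(t)|) dt ). -/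

import Mathlib

/-
Since `Im k(λ) ≥ 0`, `|e^{-2ik(λ)(x-t)}| ≤ 1` for `t ≥ x`, so every entry of `G(x,t,λ)` is bounded
by `K₁(λ)`, and the integrand of the recursion is bounded by `K₁(λ) w(t) |χⁿ(t,λ)|` with
`w = |p₁| + |p₂| + 2|q|`. For the tail `W(x) = ∫_x^∞ w`, Fubini gives
`∫_x^∞ w W^n = W(x)^{n+1}/(n+1)`, so induction on `n` yields `|χⁿ(x,λ)| ≤ K₂(λ) (K₁(λ) W(x))ⁿ/n!`,
and the series is dominated by the exponential series.
-/

open MeasureTheory Matrix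

/-- The quasi-momentum `k(λ) = λ·(1 − m²/λ²)^{1/2}` (principal branch). -/
noncomputable def qmom (m : ℝ) (lam : ℂ) : ℂ := lam * (1 - (m : ℂ) ^ 2 / lam ^ 2) ^ ((1 : ℂ) / 2)

/-- `k₀(λ) = (λ+m)/(i·k(λ))`. -/
noncomputable def kzero (m : ℝ) (lam : ℂ) : ℂ := (lam + (m : ℂ)) / (Complex.I * qmom m lam)

/-- `K₁(λ) = max(|k₀(λ)|, |k₀(λ)|⁻¹)`. -/
noncomputable def K1 (m : ℝ) (lam : ℂ) : ℝ :=
  max ‖kzero m lam‖ ‖kzero m lam‖⁻¹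

/-- `K₂(λ) = max(|k₀(λ)|, 1)`. -/
noncomputable def K2 (m : ℝ) (lam : ℂ) : ℝ := max ‖kzero m lam‖ 1

/-- The 2×2 kernel `G(x,t,λ)`. -/
noncomputable def Gker (m : ℝ) (lam : ℂ) (x t : ℝ) : Matrix (Fin 2) (Fin 2) ℂ :=
  (1 / 2 : ℂ) •
    !![1 + Complex.exp (-2 * Complex.I * qmom m lam * ((x : ℂ) - (t : ℂ))),
        kzero m lam * (1 - Complex.exp (-2 * Complex.I * qmom m lam * ((x : ℂ) - (t : ℂ))));
      (1 - Complex.exp (-2 * Complex.I * qmom m lam * ((x : ℂ) - (t : ℂ)))) / kzero m lam,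
        1 + Complex.exp (-2 * Complex.I * qmom m lam * ((x : ℂ) - (t : ℂ)))]

/-- `iσ₂`. -/
def iSigma2 : Matrix (Fin 2) (Fin 2) ℂ := !![0, 1; -1, 0]

/-- The potential matrix `V(t)`. -/
noncomputable def Vmat (p₁ p₂ q : ℝ → ℝ) (t : ℝ) : Matrix (Fin 2) (Fin 2) ℂ :=
  !![(p₁ t : ℂ), (q t : ℂ); (q t : ℂ), (p₂ t : ℂ)]

open Set
open scoped Nat

section TailIntegral

variable {w : ℝ → ℝ}

lemma antitone_setIntegral_Ioi (hw : Integrable w) (hw0 : ∀ t, 0 ≤ w t) :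
    Antitone fun x => ∫ t in Ioi x, w t := by
  intro x y hxy
  have := intervalIntegral.integral_Ioi_sub_Ioi hw.integrableOn hxy
  have := intervalIntegral.integral_nonneg (μ := volume) hxy fun t _ => hw0 t
  dsimp only
  linarith

lemma integrable_mul_setIntegral_Ioi_pow (hw : Integrable w) (hw0 : ∀ t, 0 ≤ w t) (n : ℕ) :
    Integrable fun t => w t * (∫ s in Ioi t, w s) ^ n := by
  refine hw.mul_bdd (c := (∫ s, w s) ^ n)
    ((antitone_setIntegral_Ioi hw hw0).measurable.pow_const n).aestronglyMeasurable
    (Filter.Eventually.of_forall fun t => ?_)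
  have h0 : 0 ≤ ∫ s in Ioi t, w s := setIntegral_nonneg measurableSet_Ioi fun s _ => hw0 s
  rw [Real.norm_of_nonneg (pow_nonneg h0 n)]
  exact pow_le_pow_left₀ h0 (setIntegral_le_integral hw (Filter.Eventually.of_forall hw0)) n

lemma setIntegral_Ioi_mul_setIntegral_Ioi {g : ℝ → ℝ} (hw : Integrable w) (hg : Integrable g)
    (x : ℝ) :
    ∫ s in Ioi x, w s * ∫ t in Ioi s, g t = ∫ t in Ioi x, (∫ s in x..t, w s) * g t := by
  set f : ℝ → ℝ → ℝ := fun s t => if s ≤ t then w s * g t else 0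
  have hint : Integrable (Function.uncurry f) ((volume.restrict (Ioi x)).prod
      (volume.restrict (Ioi x))) :=
    (hw.restrict.mul_prod hg.restrict).indicator (measurableSet_le measurable_fst measurable_snd)
  convert integral_integral_swap hint using 1
  · refine setIntegral_congr_fun measurableSet_Ioi fun s (hs : x < s) => ?_
    have hsec : f s = (Ici s).indicator fun t => w s * g t := by
      ext t; simp [f, indicator_apply]
    rw [hsec, integral_indicator measurableSet_Ici, Measure.restrict_restrict measurableSet_Ici,
      inter_eq_left.2 (Ici_subset_Ioi.2 hs), integral_Ici_eq_integral_Ioi, integral_const_mul]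
  · refine setIntegral_congr_fun measurableSet_Ioi fun t (ht : x < t) => ?_
    have hsec : (fun s => f s t) = (Iic t).indicator fun s => w s * g t := by
      ext s; simp [f, indicator_apply]
    rw [hsec, integral_indicator measurableSet_Iic, Measure.restrict_restrict measurableSet_Iic,
      Iic_inter_Ioi, integral_mul_const, intervalIntegral.integral_of_le ht.le]

lemma setIntegral_Ioi_mul_setIntegral_Ioi_pow (hw : Integrable w) (hw0 : ∀ t, 0 ≤ w t) (n : ℕ)
    (x : ℝ) :
    ∫ t in Ioi x, w t * (∫ s in Ioi t, w s) ^ n = (∫ t in Ioi x, w t) ^ (n + 1) / (n + 1) := by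
  induction n generalizing x with
  | zero => simp
  | succ n ih =>
    set F := fun y => ∫ t in Ioi y, w t
    have hg := integrable_mul_setIntegral_Ioi_pow hw hw0
    have hfubini := setIntegral_Ioi_mul_setIntegral_Ioi hw (hg n) x
    have hright : ∀ t ∈ Ioi x, (∫ s in x..t, w s) * (w t * F t ^ n) =
        F x * (w t * F t ^ n) - w t * F t ^ (n + 1) := fun t (ht : x < t) => by
      rw [← intervalIntegral.integral_Ioi_sub_Ioi hw.integrableOn ht.le]
      ring
    simp only [ih, mul_div_assoc', integral_div] at hfubini
    rw [setIntegral_congr_fun measurableSet_Ioi hright, integral_sub ((hg n).restrict.const_mul _)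
      (hg (n + 1)).restrict, integral_const_mul, ih] at hfubini
    push_cast
    field_simp at hfubini ⊢
    linear_combination hfubini

end TailIntegral

theorem norm_volterra_iterate_le {E : Type*} [NormedAddCommGroup E] [NormedSpace ℝ E]
    {w : ℝ → ℝ} (hw : Integrable w) (hw0 : ∀ t, 0 ≤ w t) {x₀ C K : ℝ} (hK : 0 ≤ K)
    {u : ℕ → ℝ → E} (g : ℕ → ℝ → ℝ → E) (hu0 : ∀ x, x₀ ≤ x → ‖u 0 x‖ ≤ C)
    (hu : ∀ n x, x₀ ≤ x → u (n + 1) x = ∫ t in Ioi x, g n x t)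
    (hg : ∀ n x t, x₀ ≤ x → x < t → ‖g n x t‖ ≤ K * w t * ‖u n t‖) (n : ℕ) {x : ℝ}
    (hx : x₀ ≤ x) :
    ‖u n x‖ ≤ C / n ! * (K * ∫ t in Ioi x, w t) ^ n := by
  induction n generalizing x with
  | zero => simpa using hu0 x hx
  | succ n ih =>
    have hpointwise : ∀ t ∈ Ioi x, ‖g n x t‖ ≤
        C * K ^ (n + 1) / n ! * (w t * (∫ s in Ioi t, w s) ^ n) := fun t (ht : x < t) => by
      calc ‖g n x t‖ ≤ K * w t * ‖u n t‖ := hg n x t hx ht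
        _ ≤ K * w t * (C / n ! * (K * ∫ s in Ioi t, w s) ^ n) := by
          gcongr
          · exact mul_nonneg hK (hw0 t)
          · exact ih (hx.trans ht.le)
        _ = _ := by ring
    calc ‖u (n + 1) x‖ ≤ ∫ t in Ioi x, ‖g n x t‖ := hu n x hx ▸ norm_integral_le_integral_norm _
      _ ≤ ∫ t in Ioi x, C * K ^ (n + 1) / n ! * (w t * (∫ s in Ioi t, w s) ^ n) :=
        integral_mono_of_nonneg (Filter.Eventually.of_forall fun t => norm_nonneg _)
          ((integrable_mul_setIntegral_Ioi_pow hw hw0 n).const_mul _).restrict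
          ((ae_restrict_iff' measurableSet_Ioi).2 (Filter.Eventually.of_forall hpointwise))
      _ = C / (n + 1)! * (K * ∫ t in Ioi x, w t) ^ (n + 1) := by
        rw [integral_const_mul, setIntegral_Ioi_mul_setIntegral_Ioi_pow hw hw0, Nat.factorial_succ]
        push_cast
        field_simp
        ring

theorem summable_norm_and_norm_tsum_le_mul_exp {E : Type*} [NormedAddCommGroup E] {u : ℕ → E}
    {C a : ℝ} (hu : ∀ n, ‖u n‖ ≤ C / n ! * a ^ n) :
    Summable (fun n => ‖u n‖) ∧ ‖∑' n, u n‖ ≤ C * Real.exp a := by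
  have hexp : HasSum (fun n => C / n ! * a ^ n) (C * Real.exp a) := by
    have hterm : (fun n : ℕ => C / n ! * a ^ n) = fun n => C * (a ^ n / n !) := by
      ext n
      ring
    rw [hterm, Real.exp_eq_exp_ℝ]
    exact (NormedSpace.expSeries_div_hasSum_exp a).mul_left C
  have hsum : Summable fun n => ‖u n‖ :=
    hexp.summable.of_nonneg_of_le (fun n => norm_nonneg _) hu
  refine ⟨hsum, (norm_tsum_le_tsum_norm hsum).trans ?_⟩
  exact hexp.tsum_eq ▸ hsum.tsum_le_tsum hu hexp.summable

lemma norm_mulVec_le_mul_sum_norm {ι κ α : Type*} [Fintype ι] [Fintype κ] [SeminormedRing α]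
    {A : Matrix ι κ α} {c : ℝ} (hc : 0 ≤ c) (hA : ∀ i j, ‖A i j‖ ≤ c) (v : κ → α) :
    ‖A *ᵥ v‖ ≤ c * ∑ j, ‖v j‖ := by
  refine (pi_norm_le_iff_of_nonneg (by positivity)).2 fun i => ?_
  calc ‖∑ j, A i j * v j‖ ≤ ∑ j, ‖A i j‖ * ‖v j‖ := norm_sum_le_of_le _ fun j _ => norm_mul_le _ _
    _ ≤ ∑ j, c * ‖v j‖ := by gcongr; exact hA i j
    _ = c * ∑ j, ‖v j‖ := (Finset.mul_sum ..).symm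

section QuasiMomentum

variable {m : ℝ} {lam : ℂ}

lemma ne_zero_and_ne_and_ne_neg_of_forall_Icc_ne (hm : 0 ≤ m)
    (hlam : ∀ t ∈ Icc (-m) m, (t : ℂ) ≠ lam) : lam ≠ 0 ∧ lam ≠ m ∧ lam ≠ -m :=
  ⟨fun h => hlam 0 ⟨by linarith, hm⟩ (by simp [h]), fun h => hlam m ⟨by linarith, le_rfl⟩ h.symm,
    fun h => hlam (-m) ⟨le_rfl, by linarith⟩ (by simp [h])⟩

lemma qmom_ne_zero (hm : 0 ≤ m) (hlam : ∀ t ∈ Icc (-m) m, (t : ℂ) ≠ lam) : qmom m lam ≠ 0 := by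
  obtain ⟨h0, hpos, hneg⟩ := ne_zero_and_ne_and_ne_neg_of_forall_Icc_ne hm hlam
  refine mul_ne_zero h0 fun h => ?_
  rw [Complex.cpow_eq_zero_iff, sub_eq_zero, eq_div_iff (pow_ne_zero 2 h0)] at h
  have : (lam - m) * (lam + m) = 0 := by linear_combination h.1
  rcases mul_eq_zero.1 this with h | h
  · exact hpos (sub_eq_zero.1 h)
  · exact hneg (eq_neg_of_add_eq_zero_left h)

lemma kzero_ne_zero (hm : 0 ≤ m) (hlam : ∀ t ∈ Icc (-m) m, (t : ℂ) ≠ lam) : kzero m lam ≠ 0 :=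
  div_ne_zero (fun h => (ne_zero_and_ne_and_ne_neg_of_forall_Icc_ne hm hlam).2.2
      (eq_neg_of_add_eq_zero_left h))
    (mul_ne_zero Complex.I_ne_zero (qmom_ne_zero hm hlam))

lemma im_one_sub_sq_div_sq (m : ℝ) (lam : ℂ) :
    (1 - (m : ℂ) ^ 2 / lam ^ 2).im = 2 * m ^ 2 * lam.re * lam.im / Complex.normSq lam ^ 2 := by
  simp only [pow_two, Complex.sub_im, Complex.one_im, Complex.div_im, Complex.mul_im,
    Complex.ofReal_re, Complex.ofReal_im, mul_zero, zero_mul, add_zero, Complex.mul_re,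
    Complex.normSq_mul, zero_div, sub_zero, zero_sub, sub_neg_eq_add, zero_add]
  ring

lemma im_qmom_nonneg (hm : 0 < m) (hlamim : 0 ≤ lam.im)
    (hlam : ∀ t ∈ Icc (-m) m, (t : ℂ) ≠ lam) : 0 ≤ (qmom m lam).im := by
  set w : ℂ := 1 - (m : ℂ) ^ 2 / lam ^ 2 with hw
  have hk : (qmom m lam).im = lam.re * (w ^ (2⁻¹ : ℂ)).im + lam.im * (w ^ (2⁻¹ : ℂ)).re := by
    simp [qmom, Complex.mul_im, ← hw]
  -- The principal root has `Re ≥ 0`, and `Im √w` has the sign of `Im w`, i.e. of `Re λ`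
  -- (for real `λ < -m`, `w` is a positive real and `√w` is real).
  rw [hk]
  refine add_nonneg ?_ (mul_nonneg hlamim (by rw [Complex.cpow_inv_two_re]; positivity))
  rcases le_or_gt 0 lam.re with hre | hre
  · have hw_im : 0 ≤ w.im := by rw [im_one_sub_sq_div_sq]; positivity
    rw [Complex.cpow_inv_two_im_eq_sqrt hw_im]
    positivity
  rcases hlamim.eq_or_lt with him | him
  · have hlam_re : lam = (lam.re : ℂ) := Complex.ext rfl (by simp [← him])
    have hlt : lam.re < -m := by
      by_contra! h
      exact hlam lam.re ⟨h, by linarith⟩ hlam_re.symm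
    have hr : 0 ≤ 1 - m ^ 2 / lam.re ^ 2 := by
      rw [sub_nonneg, div_le_one (by nlinarith)]
      nlinarith
    have hw_real : w = ((1 - m ^ 2 / lam.re ^ 2 : ℝ) : ℂ) := by
      rw [hw, hlam_re]
      push_cast
      simp
    rw [hw_real, Complex.cpow_inv_two_im_eq_sqrt (Complex.ofReal_im _).ge, Complex.norm_real,
      Real.norm_of_nonneg hr, Complex.ofReal_re, sub_self, zero_div, Real.sqrt_zero, mul_zero]
  · have hw_im : w.im < 0 := by
      rw [im_one_sub_sq_div_sq]
      have hnum : 2 * m ^ 2 * lam.re * lam.im < 0 :=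
        mul_neg_of_neg_of_pos (mul_neg_of_pos_of_neg (by positivity) hre) him
      have hlam0 : lam ≠ 0 := fun h => by simp [h] at him
      exact div_neg_of_neg_of_pos hnum (pow_pos (Complex.normSq_pos.2 hlam0) 2)
    rw [Complex.cpow_inv_two_im_eq_neg_sqrt hw_im]
    exact mul_nonneg_of_nonpos_of_nonpos hre.le (neg_nonpos.2 (Real.sqrt_nonneg _))

end QuasiMomentum

lemma norm_exp_neg_two_I_mul_le_one {k : ℂ} (hk : 0 ≤ k.im) {x t : ℝ} (hxt : x ≤ t) :
    ‖Complex.exp (-2 * Complex.I * k * ((x : ℂ) - (t : ℂ)))‖ ≤ 1 := by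
  rw [Complex.norm_exp, Real.exp_le_one_iff]
  have hre : (-2 * Complex.I * k * ((x : ℂ) - (t : ℂ))).re = 2 * (x - t) * k.im := by
    simp only [neg_mul, Complex.neg_re, Complex.mul_re, Complex.re_ofNat, Complex.I_re, mul_zero,
      Complex.im_ofNat, Complex.I_im, mul_one, sub_self, zero_mul, Complex.mul_im, add_zero,
      zero_sub, Complex.sub_re, Complex.ofReal_re, zero_add, Complex.sub_im, Complex.ofReal_im,
      sub_zero, neg_neg]
    ring
  rw [hre]
  exact mul_nonpos_of_nonpos_of_nonneg (by linarith) hk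

lemma one_le_max_norm_norm_inv {k : ℂ} (hk : k ≠ 0) : 1 ≤ max ‖k‖ ‖k‖⁻¹ := by
  rcases le_total 1 ‖k‖ with h1 | h1
  · exact h1.trans (le_max_left _ _)
  · exact ((one_le_inv₀ (norm_pos_iff.2 hk)).2 h1).trans (le_max_right _ _)

lemma one_le_K1 {m : ℝ} {lam : ℂ} (hk0 : kzero m lam ≠ 0) : 1 ≤ K1 m lam :=
  one_le_max_norm_norm_inv hk0

lemma norm_half_smul_apply_le {k E : ℂ} (hk : k ≠ 0) (hE : ‖E‖ ≤ 1) (i j : Fin 2) :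
    ‖((1 / 2 : ℂ) • !![1 + E, k * (1 - E); (1 - E) / k, 1 + E]) i j‖ ≤ max ‖k‖ ‖k‖⁻¹ := by
  have hplus : 2⁻¹ * ‖1 + E‖ ≤ 1 := by linarith [norm_add_le 1 E, norm_one (α := ℂ)]
  have hminus : 2⁻¹ * ‖1 - E‖ ≤ 1 := by linarith [norm_sub_le 1 E, norm_one (α := ℂ)]
  have h1 := one_le_max_norm_norm_inv hk
  have hpos : 0 < ‖k‖ := norm_pos_iff.2 hk
  fin_cases i <;> fin_cases j <;>
    simp only [Fin.zero_eta, Fin.mk_one, Fin.isValue, Matrix.smul_apply, of_apply, cons_val',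
      cons_val_zero, cons_val_one, cons_val_fin_one, smul_eq_mul, one_div, norm_mul, norm_div,
      norm_inv, Complex.norm_ofNat]
  · exact hplus.trans h1
  · refine le_max_of_le_left ?_
    nlinarith
  · refine le_max_of_le_right ?_
    rw [mul_div_assoc', div_le_iff₀ hpos, inv_mul_cancel₀ hpos.ne']
    exact hminus
  · exact hplus.trans h1

lemma norm_Gker_apply_le {m : ℝ} {lam : ℂ} (hk0 : kzero m lam ≠ 0) (hk : 0 ≤ (qmom m lam).im)
    {x t : ℝ} (hxt : x ≤ t) (i j : Fin 2) : ‖Gker m lam x t i j‖ ≤ K1 m lam :=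
  norm_half_smul_apply_le hk0 (norm_exp_neg_two_I_mul_le_one hk hxt) i j

lemma norm_ofReal_mul_add_ofReal_mul_le (a b : ℝ) {y z : ℂ} {r : ℝ} (hy : ‖y‖ ≤ r) (hz : ‖z‖ ≤ r) :
    ‖(a : ℂ) * y + (b : ℂ) * z‖ ≤ (|a| + |b|) * r := by
  calc ‖(a : ℂ) * y + (b : ℂ) * z‖ ≤ |a| * ‖y‖ + |b| * ‖z‖ := by
        simpa [norm_mul] using norm_add_le ((a : ℂ) * y) ((b : ℂ) * z)
    _ ≤ |a| * r + |b| * r := by gcongr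
    _ = (|a| + |b|) * r := by ring

lemma sum_norm_iSigma2_mulVec_Vmat_mulVec_le (p₁ p₂ q : ℝ → ℝ) (t : ℝ) (v : Fin 2 → ℂ) :
    ∑ j, ‖(iSigma2 *ᵥ (Vmat p₁ p₂ q t *ᵥ v)) j‖ ≤ (|p₁ t| + |p₂ t| + 2 * |q t|) * ‖v‖ := by
  have h0 := norm_le_pi_norm v 0
  have h1 := norm_le_pi_norm v 1
  simp only [mulVec, dotProduct, iSigma2, Vmat, of_apply, cons_val', cons_val_fin_one,
    Fin.sum_univ_two, Fin.isValue, cons_val_zero, cons_val_one, zero_mul, one_mul, zero_add,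
    neg_mul, neg_add_rev, add_zero]
  rw [← neg_add, norm_neg]
  calc _ ≤ (|q t| + |p₂ t|) * ‖v‖ + (|q t| + |p₁ t|) * ‖v‖ :=
        add_le_add (norm_ofReal_mul_add_ofReal_mul_le _ _ h0 h1)
          (norm_ofReal_mul_add_ofReal_mul_le _ _ h1 h0)
    _ = _ := by ring

lemma norm_vecCons_kzero_one_le (m : ℝ) (lam : ℂ) : ‖![kzero m lam, 1]‖ ≤ K2 m lam :=
  (pi_norm_le_iff_of_nonneg (le_max_of_le_right zero_le_one)).2 fun i => by
    fin_cases i <;> simp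

lemma norm_Gker_mul_iSigma2_mul_Vmat_mulVec_le {m : ℝ} {lam : ℂ} (hk0 : kzero m lam ≠ 0)
    (hk : 0 ≤ (qmom m lam).im) (p₁ p₂ q : ℝ → ℝ) {x t : ℝ} (hxt : x ≤ t) (v : Fin 2 → ℂ) :
    ‖(Gker m lam x t * iSigma2 * Vmat p₁ p₂ q t) *ᵥ v‖ ≤
      K1 m lam * (|p₁ t| + |p₂ t| + 2 * |q t|) * ‖v‖ := by
  rw [Matrix.mul_assoc, ← mulVec_mulVec, ← mulVec_mulVec]
  calc _ ≤ K1 m lam * ∑ j, ‖(iSigma2 *ᵥ (Vmat p₁ p₂ q t *ᵥ v)) j‖ :=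
        norm_mulVec_le_mul_sum_norm (zero_le_one.trans (one_le_K1 hk0))
          (norm_Gker_apply_le hk0 hk hxt) _
    _ ≤ K1 m lam * ((|p₁ t| + |p₂ t| + 2 * |q t|) * ‖v‖) := by
        gcongr
        · exact zero_le_one.trans (one_le_K1 hk0)
        · exact sum_norm_iSigma2_mulVec_Vmat_mulVec_le p₁ p₂ q t v
    _ = _ := (mul_assoc ..).symm

theorem stmt5 (m : ℝ) (hm : 0 < m) (p₁ p₂ q : ℝ → ℝ)
    (hp₁ : IntegrableOn p₁ (Set.Ici 0)) (hp₂ : IntegrableOn p₂ (Set.Ici 0))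
    (hq : IntegrableOn q (Set.Ici 0))
    (lam : ℂ) (hlamim : 0 ≤ lam.im)
    (hlam : ∀ t : ℝ, t ∈ Set.Icc (-m) m → (t : ℂ) ≠ lam)
    (χ : ℕ → ℝ → Fin 2 → ℂ)
    (hχ0 : ∀ x : ℝ, χ 0 x = ![kzero m lam, 1])
    (hχs : ∀ n : ℕ, ∀ x : ℝ,
      χ (n + 1) x
        = ∫ t in Set.Ioi x, (Gker m lam x t * iSigma2 * Vmat p₁ p₂ q t).mulVec (χ n t)) :
    (∀ n : ℕ, 1 ≤ n → ∀ x : ℝ, 0 ≤ x →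
      ‖χ n x‖ ≤ (K2 m lam / n.factorial)
          * (K1 m lam * ∫ t in Set.Ioi x, (|p₁ t| + |p₂ t| + 2 * |q t|)) ^ n) ∧
    (∀ x : ℝ, 0 ≤ x →
      Summable (fun n : ℕ => ‖χ n x‖) ∧
      ‖∑' n : ℕ, χ n x‖
        ≤ K2 m lam
          * Real.exp (K1 m lam * ∫ t in Set.Ioi x, (|p₁ t| + |p₂ t| + 2 * |q t|))) := by
  have hk0 := kzero_ne_zero hm.le hlam
  set w : ℝ → ℝ := fun t => |p₁ t| + |p₂ t| + 2 * |q t|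
  have hw : IntegrableOn w (Ici 0) := (hp₁.abs.add hp₂.abs).add (hq.abs.const_mul 2)
  have hw_tail : ∀ x : ℝ, 0 ≤ x → ∫ t in Ioi x, (Ici 0).indicator w t = ∫ t in Ioi x, w t :=
    fun x hx => setIntegral_congr_fun measurableSet_Ioi fun t (ht : x < t) =>
      indicator_of_mem (hx.trans ht.le) w
  have hbound : ∀ n x, 0 ≤ x → ‖χ n x‖ ≤ K2 m lam / n ! * (K1 m lam * ∫ t in Ioi x, w t) ^ n := by
    intro n x hx
    rw [← hw_tail x hx]
    refine norm_volterra_iterate_le (hw.integrable_indicator measurableSet_Ici)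
      (indicator_nonneg fun t _ => by positivity) (zero_le_one.trans (one_le_K1 hk0))
      _ (fun x _ => hχ0 x ▸ norm_vecCons_kzero_one_le m lam) (fun n x _ => hχs n x)
      (fun n x t hx hxt => ?_) n hx
    rw [indicator_of_mem (mem_Ici.2 (hx.trans hxt.le))]
    exact norm_Gker_mul_iSigma2_mul_Vmat_mulVec_le hk0 (im_qmom_nonneg hm hlamim hlam) p₁ p₂ q
      hxt.le _
  exact ⟨fun n _ x hx => hbound n x hx,
    fun x hx => summable_norm_and_norm_tsum_le_mul_exp (hbound · x hx)⟩
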